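/- There exist a real α₀ ∈ (0,1) and an integer v₀ such that for every real α ∈ (0, α₀] and every integer v ≥ v₀, setting p = 2, q = 4 and h = ⌊α·v³⌋, the following holds: for all integers n ≥ 1 and l ≥ 0 with n + l + 1 ≤ h + 1, and all vectors w^{(n)}, w^{(n+1)}, …, w^{(n+l+1)}, w* ∈ {−1,1}^v, one has ∏_{i=n}^{n+l} g_i(dist(w^{(i)}, w^{(i+1)})) · g_{n+l+1}(dist(w^{(n+l+1)}, w*)) ≤ g_n(dist(w^{(n)}, w^{(n+1)})) · g_{n+1}(dist(w^{(n+1)}, w*)), where dist denotes Hamming distance on {−1,1}^v. -/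

import Mathlib

/-!
Write `f t = 1 - t + t²/2`, so that `g_i x = f (x / C_i)` with `C_i = v^{q-1}(3 - i/h)`.
The scale `C_i` decreases in `i` and is at least `v^{q-1} ≥ v` for `i ≤ 2h`, while Hamming
distances are at most `v`; so every argument lies in `[0, 1]`, where `f` decreases, and each
factor only grows when `C_i` is replaced by the scale `C_{n+1}` of the first compressed step.
The clamped function `φ t = f (min t 1)` is antitone on `[0, ∞)` and satisfies
`f z · φ y ≤ φ (z + y)` for `z ∈ [0, 1]`, `y ≥ 0`. Hence the product along a path is at most `φ`
of its total length, which by the triangle inequality is at most `φ = f` of the direct distance.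
-/

/-- `T p x` is the degree-`p` Taylor polynomial of the exponential function at `0`. -/
noncomputable def taylorExp (p : ℕ) (x : ℝ) : ℝ :=
  ∑ j ∈ Finset.range (p + 1), x ^ j / (Nat.factorial j : ℝ)

/-- The round reward polynomial `g_i(x) = T_p(−x/(v^{q−1}·(3 − i/h)))`. -/
noncomputable def roundPoly (v h p q : ℕ) (i : ℕ) (x : ℝ) : ℝ :=
  taylorExp p (-(x / ((v : ℝ) ^ (q - 1) * (3 - (i : ℝ) / (h : ℝ)))))

open Finset

noncomputable def truncExpNeg (t : ℝ) : ℝ := 1 - t + t ^ 2 / 2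

theorem taylorExp_two_neg (t : ℝ) : taylorExp 2 (-t) = truncExpNeg t := by
  simp only [taylorExp, truncExpNeg, sum_range_succ, range_zero, sum_empty, Nat.factorial]
  push_cast
  ring

namespace truncExpNeg

theorem nonneg (t : ℝ) : 0 ≤ truncExpNeg t := by
  unfold truncExpNeg; nlinarith [sq_nonneg (t - 1)]

theorem le_one {t : ℝ} (h0 : 0 ≤ t) (h2 : t ≤ 2) : truncExpNeg t ≤ 1 := by
  unfold truncExpNeg; nlinarith

theorem antitoneOn : AntitoneOn truncExpNeg (Set.Icc 0 1) := by
  rintro a ⟨ha0, -⟩ b ⟨-, hb1⟩ hab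
  unfold truncExpNeg; nlinarith

/-- `f a * f b - f (a + b) = a b (a b - 2 a - 2 b) / 4`. -/
theorem mul_le_add {a b : ℝ} (ha : 0 ≤ a) (ha2 : a ≤ 2) (hb : 0 ≤ b) :
    truncExpNeg a * truncExpNeg b ≤ truncExpNeg (a + b) := by
  unfold truncExpNeg
  nlinarith [mul_nonneg (mul_nonneg ha hb) (mul_nonneg hb (by linarith : (0 : ℝ) ≤ 2 - a)),
    mul_nonneg (mul_nonneg ha hb) ha]

theorem mul_le_half {a b : ℝ} (ha : 0 ≤ a) (ha1 : a ≤ 1) (hb1 : b ≤ 1) (hab : 1 ≤ a + b) :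
    truncExpNeg a * truncExpNeg b ≤ 1 / 2 := by
  have hb : truncExpNeg b ≤ truncExpNeg (1 - a) :=
    antitoneOn ⟨by linarith, by linarith⟩ ⟨by linarith, hb1⟩ (by linarith)
  calc truncExpNeg a * truncExpNeg b ≤ truncExpNeg a * truncExpNeg (1 - a) :=
        mul_le_mul_of_nonneg_left hb (nonneg a)
    _ ≤ 1 / 2 := by
        unfold truncExpNeg; nlinarith [mul_nonneg ha (by linarith : (0 : ℝ) ≤ 1 - a)]

end truncExpNeg

/-- The largest antitone minorant of `truncExpNeg` on `[0, ∞)`. -/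
noncomputable def truncExpNegClamp (t : ℝ) : ℝ := truncExpNeg (min t 1)

namespace truncExpNegClamp

theorem eq_truncExpNeg {t : ℝ} (ht : t ≤ 1) : truncExpNegClamp t = truncExpNeg t := by
  rw [truncExpNegClamp, min_eq_left ht]

theorem antitoneOn : AntitoneOn truncExpNegClamp (Set.Ici 0) := by
  intro s hs t _ hst
  exact truncExpNeg.antitoneOn ⟨le_min hs zero_le_one, min_le_right _ _⟩
    ⟨le_min (le_trans hs hst) zero_le_one, min_le_right _ _⟩ (min_le_min_right 1 hst)

theorem truncExpNeg_mul_le {z y : ℝ} (hz : 0 ≤ z) (hz1 : z ≤ 1) (hy : 0 ≤ y) :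
    truncExpNeg z * truncExpNegClamp y ≤ truncExpNegClamp (z + y) := by
  unfold truncExpNegClamp
  rcases le_total 1 y with hy1 | hy1
  · rw [min_eq_right hy1, min_eq_right (by linarith)]
    exact mul_le_of_le_one_left (truncExpNeg.nonneg 1) (truncExpNeg.le_one hz (by linarith))
  rw [min_eq_left hy1]
  rcases le_total (z + y) 1 with hzy | hzy
  · rw [min_eq_left hzy]
    exact truncExpNeg.mul_le_add hz (by linarith) hy
  · rw [min_eq_right hzy]
    calc truncExpNeg z * truncExpNeg y ≤ 1 / 2 := truncExpNeg.mul_le_half hz hz1 hy1 hzy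
      _ = truncExpNeg 1 := by norm_num [truncExpNeg]

theorem prod_truncExpNeg_le {ι : Type*} (s : Finset ι) {z : ι → ℝ}
    (hz : ∀ i ∈ s, z i ∈ Set.Icc 0 1) :
    ∏ i ∈ s, truncExpNeg (z i) ≤ truncExpNegClamp (∑ i ∈ s, z i) := by
  classical
  induction s using Finset.induction_on with
  | empty => norm_num [truncExpNegClamp, truncExpNeg]
  | insert a s ha ih =>
    rw [prod_insert ha, sum_insert ha]
    obtain ⟨hza, hza1⟩ := hz a (mem_insert_self a s)
    have hzs : ∀ i ∈ s, z i ∈ Set.Icc 0 1 := fun i hi => hz i (mem_insert_of_mem hi)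
    calc truncExpNeg (z a) * ∏ i ∈ s, truncExpNeg (z i)
        ≤ truncExpNeg (z a) * truncExpNegClamp (∑ i ∈ s, z i) :=
          mul_le_mul_of_nonneg_left (ih hzs) (truncExpNeg.nonneg _)
      _ ≤ truncExpNegClamp (z a + ∑ i ∈ s, z i) :=
          truncExpNeg_mul_le hza hza1 (sum_nonneg fun i hi => (hzs i hi).1)

end truncExpNegClamp

theorem hammingDist_le_sum_Ico {ι β : Type*} [Fintype ι] [DecidableEq β] (u : ℕ → ι → β)
    {m j : ℕ} (hmj : m ≤ j) :
    hammingDist (u m) (u j) ≤ ∑ i ∈ Ico m j, hammingDist (u i) (u (i + 1)) := by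
  induction j, hmj using Nat.le_induction with
  | base => simp
  | succ j hmj ih =>
    rw [sum_Ico_succ_top hmj]
    exact (hammingDist_triangle _ (u j) _).trans (Nat.add_le_add_right ih _)

noncomputable def roundScale (v h q i : ℕ) : ℝ := (v : ℝ) ^ (q - 1) * (3 - (i : ℝ) / (h : ℝ))

section roundScale

variable {v h q : ℕ}

theorem roundPoly_two_eq (i : ℕ) (x : ℝ) :
    roundPoly v h 2 q i x = truncExpNeg (x / roundScale v h q i) := by
  rw [roundPoly, taylorExp_two_neg, roundScale]

theorem roundPoly_two_nonneg (i : ℕ) (x : ℝ) : 0 ≤ roundPoly v h 2 q i x := by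
  rw [roundPoly_two_eq]
  exact truncExpNeg.nonneg _

theorem roundScale_antitone : Antitone (roundScale v h q) := by
  intro i j hij
  unfold roundScale
  gcongr

theorem pow_le_roundScale {i : ℕ} (hi : i ≤ 2 * h) : (v : ℝ) ^ (q - 1) ≤ roundScale v h q i := by
  have hih : (i : ℝ) / h ≤ 2 := by
    rcases Nat.eq_zero_or_pos h with rfl | hh
    · simp
    · rw [div_le_iff₀ (by exact_mod_cast hh)]
      exact_mod_cast hi
  unfold roundScale
  nlinarith [pow_nonneg (Nat.cast_nonneg v : (0 : ℝ) ≤ v) (q - 1)]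

theorem roundScale_pos (hv : 0 < v) {i : ℕ} (hi : i ≤ 2 * h) : 0 < roundScale v h q i :=
  (pow_pos (by exact_mod_cast hv) _).trans_le (pow_le_roundScale hi)

theorem div_roundScale_mem_Icc (hv : 0 < v) (hq : 2 ≤ q) {i : ℕ} (hi : i ≤ 2 * h) {x : ℝ}
    (hx : x ∈ Set.Icc 0 (v : ℝ)) : x / roundScale v h q i ∈ Set.Icc 0 1 := by
  have hC := roundScale_pos (q := q) hv hi
  have hvC : (v : ℝ) ≤ roundScale v h q i :=
    calc (v : ℝ) = (v : ℝ) ^ 1 := (pow_one _).symm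
      _ ≤ (v : ℝ) ^ (q - 1) := pow_le_pow_right₀ (by exact_mod_cast hv) (by omega)
      _ ≤ roundScale v h q i := pow_le_roundScale hi
  exact ⟨div_nonneg hx.1 hC.le, (div_le_one hC).2 (hx.2.trans hvC)⟩

theorem roundPoly_two_le_of_le (hv : 0 < v) (hq : 2 ≤ q) {i j : ℕ} (hji : j ≤ i)
    (hi : i ≤ 2 * h) {x : ℝ} (hx : x ∈ Set.Icc 0 (v : ℝ)) :
    roundPoly v h 2 q i x ≤ roundPoly v h 2 q j x := by
  rw [roundPoly_two_eq, roundPoly_two_eq]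
  exact truncExpNeg.antitoneOn (div_roundScale_mem_Icc hv hq (hji.trans hi) hx)
    (div_roundScale_mem_Icc hv hq hi hx)
    (div_le_div_of_nonneg_left hx.1 (roundScale_pos hv hi) (roundScale_antitone hji))

end roundScale

theorem hammingDist_mem_Icc {v : ℕ} {β : Type*} [DecidableEq β] (a b : Fin v → β) :
    (hammingDist a b : ℝ) ∈ Set.Icc 0 (v : ℝ) :=
  ⟨Nat.cast_nonneg _,
    by exact_mod_cast hammingDist_le_card_fintype.trans_eq (Fintype.card_fin v)⟩

theorem prod_roundPoly_path_le {v h q : ℕ} {β : Type*} [DecidableEq β] (hv : 0 < v) (hq : 2 ≤ q)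
    (u : ℕ → Fin v → β) (y : Fin v → β) {m j : ℕ} (hmj : m ≤ j) (hj : j ≤ 2 * h) :
    (∏ i ∈ Ico m j, roundPoly v h 2 q i (hammingDist (u i) (u (i + 1)))) *
        roundPoly v h 2 q j (hammingDist (u j) y)
      ≤ roundPoly v h 2 q m (hammingDist (u m) y) := by
  set c := roundScale v h q m
  have hc : 0 < c := roundScale_pos hv (hmj.trans hj)
  have hz (a b : Fin v → β) : (hammingDist a b : ℝ) / c ∈ Set.Icc 0 1 :=
    div_roundScale_mem_Icc hv hq (hmj.trans hj) (hammingDist_mem_Icc a b)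
  have hstep {i : ℕ} (hmi : m ≤ i) (hi : i ≤ 2 * h) (a b : Fin v → β) :
      roundPoly v h 2 q i (hammingDist a b) ≤ truncExpNeg (hammingDist a b / c) := by
    rw [← roundPoly_two_eq]
    exact roundPoly_two_le_of_le hv hq hmi hi (hammingDist_mem_Icc a b)
  have htri : (hammingDist (u m) y : ℝ) / c
      ≤ hammingDist (u j) y / c + ∑ i ∈ Ico m j, (hammingDist (u i) (u (i + 1)) : ℝ) / c := by
    have hpath : hammingDist (u m) y
        ≤ hammingDist (u j) y + ∑ i ∈ Ico m j, hammingDist (u i) (u (i + 1)) := by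
      linarith [hammingDist_triangle (u m) (u j) y, hammingDist_le_sum_Ico u hmj]
    rw [← sum_div, ← add_div]
    gcongr
    exact_mod_cast hpath
  calc (∏ i ∈ Ico m j, roundPoly v h 2 q i (hammingDist (u i) (u (i + 1)))) *
        roundPoly v h 2 q j (hammingDist (u j) y)
      ≤ (∏ i ∈ Ico m j, truncExpNeg (hammingDist (u i) (u (i + 1)) / c)) *
          truncExpNeg (hammingDist (u j) y / c) := by
        refine mul_le_mul (prod_le_prod (fun i _ => roundPoly_two_nonneg _ _) fun i hi => ?_)
          (hstep hmj hj _ _) (roundPoly_two_nonneg _ _)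
          (prod_nonneg fun i _ => truncExpNeg.nonneg _)
        obtain ⟨hmi, hij⟩ := mem_Ico.1 hi
        exact hstep hmi (by omega) _ _
    _ ≤ truncExpNegClamp (∑ i ∈ Ico m j, (hammingDist (u i) (u (i + 1)) : ℝ) / c) *
          truncExpNeg (hammingDist (u j) y / c) :=
        mul_le_mul_of_nonneg_right (truncExpNegClamp.prod_truncExpNeg_le _ fun i _ => hz _ _)
          (truncExpNeg.nonneg _)
    _ ≤ truncExpNegClamp (hammingDist (u j) y / c +
          ∑ i ∈ Ico m j, (hammingDist (u i) (u (i + 1)) : ℝ) / c) := by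
        rw [mul_comm]
        exact truncExpNegClamp.truncExpNeg_mul_le (hz _ _).1 (hz _ _).2
          (sum_nonneg fun i _ => (hz _ _).1)
    _ ≤ truncExpNegClamp (hammingDist (u m) y / c) :=
        truncExpNegClamp.antitoneOn (hz _ _).1 ((hz _ _).1.trans htri) htri
    _ = roundPoly v h 2 q m (hammingDist (u m) y) := by
        rw [truncExpNegClamp.eq_truncExpNeg (hz _ _).2, roundPoly_two_eq]

/-- Equation (eq:path-compression), regime `p = 2`, `q = 4`,
`h = ⌊α·v³⌋`: there exist `α₀ ∈ (0,1)` and `v₀` such that for all `α ∈ (0, α₀]` and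
`v ≥ v₀`, for all `n ≥ 1`, `l ≥ 0` with `n + l + 1 ≤ h + 1`, and all vectors
`w⁽ⁿ⁾, …, w⁽ⁿ⁺ˡ⁺¹⁾, w* ∈ {−1,1}^v`,
`∏_{i=n}^{n+l} g_i(dist(w⁽ⁱ⁾, w⁽ⁱ⁺¹⁾)) · g_{n+l+1}(dist(w⁽ⁿ⁺ˡ⁺¹⁾, w*))
  ≤ g_n(dist(w⁽ⁿ⁾, w⁽ⁿ⁺¹⁾)) · g_{n+1}(dist(w⁽ⁿ⁺¹⁾, w*))`,
where `dist` is the Hamming distance. -/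
theorem path_compression :
    ∃ α₀ : ℝ, α₀ ∈ Set.Ioo (0 : ℝ) 1 ∧ ∃ v₀ : ℕ,
      ∀ α : ℝ, 0 < α → α ≤ α₀ → ∀ v : ℕ, v₀ ≤ v →
        ∀ h : ℕ, h = ⌊α * (v : ℝ) ^ 3⌋₊ →
          ∀ n l : ℕ, 1 ≤ n → n + l + 1 ≤ h + 1 →
            ∀ w : ℕ → (Fin v → ℤ), (∀ k j, w k j = -1 ∨ w k j = 1) →
              ∀ wstar : Fin v → ℤ, (∀ j, wstar j = -1 ∨ wstar j = 1) →
                (∏ i ∈ Finset.Icc n (n + l),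
                      roundPoly v h 2 4 i (hammingDist (w i) (w (i + 1)) : ℝ)) *
                    roundPoly v h 2 4 (n + l + 1) (hammingDist (w (n + l + 1)) wstar : ℝ)
                  ≤ roundPoly v h 2 4 n (hammingDist (w n) (w (n + 1)) : ℝ) *
                    roundPoly v h 2 4 (n + 1) (hammingDist (w (n + 1)) wstar : ℝ) := by
  refine ⟨1 / 2, ⟨by norm_num, by norm_num⟩, 1, ?_⟩
  rintro α - - v hv h - n l hn hnl w - wstar -
  rw [← mul_prod_Ioc_eq_prod_Icc (by omega : n ≤ n + l), ← Icc_add_one_left_eq_Ioc,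
    ← Ico_add_one_right_eq_Icc, mul_assoc]
  exact mul_le_mul_of_nonneg_left (prod_roundPoly_path_le hv (by norm_num) w wstar
    (by omega) (by omega)) (roundPoly_two_nonneg _ _)
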